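/- Every matrix A in Sp(1,1) can be written as A = diag(u,1)·exp(X)·(v·I_2) for some unit quaternions u, v and some X in m_B, and this decomposition is unique: if diag(u_1,1)·exp(X_1)·v_1 = diag(u_2,1)·exp(X_2)·v_2 with u_i, v_i in Sp(1) and X_i in m_B (where v_i denotes the scalar matrix v_i·I_2), then u_1 = u_2, v_1 = v_2, and X_1 = X_2. -/

import Mathlib

/-!
The matrix `X = !![0, star q; q, 0]` satisfies `X * X = ‖q‖ ^ 2 • 1`, so its exponential is
`cosh ‖q‖ • 1 + (sinh ‖q‖ / ‖q‖) • X`, and `diag(u, 1) * exp X * (v I₂)` has entries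
`a = cosh ‖q‖ • u v`, `b = s • u q̄ v`, `c = s • q v`, `d = cosh ‖q‖ • v` with `s = sinh ‖q‖ / ‖q‖`.
For `A ∈ Sp(1,1)` the relations `āa = 1 + c̄c`, `āb = c̄d`, `d̄d = 1 + b̄b` force `‖a‖ = ‖d‖` and
`‖d‖² = 1 + ‖c‖²`; hence one can take `v = d / ‖d‖`, `‖q‖ = arsinh ‖c‖` with `q` in the direction
of `c v̄`, and `u = a v̄ / ‖d‖`, after which `b` is forced by `āb = c̄d`. Conversely `d` determines
`cosh ‖q‖ = ‖d‖` and `v`, after which `c` determines `q` and `a` determines `u`.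
-/

open Quaternion Matrix NormedSpace

theorem exp_smul_of_mul_self_eq_one {A : Type*} [Ring A] [Algebra ℝ A] [TopologicalSpace A]
    [IsTopologicalRing A] [ContinuousSMul ℝ A] [T2Space A] {Y : A} (hY : Y * Y = 1) (r : ℝ) :
    exp (r • Y) = Real.cosh r • 1 + Real.sinh r • Y := by
  have hY2 : ∀ n : ℕ, Y ^ (2 * n) = 1 := fun n => by rw [pow_mul, sq, hY, one_pow]
  rw [exp_eq_tsum ℝ]
  refine HasSum.tsum_eq (HasSum.even_add_odd ?_ ?_)
  · convert (Real.hasSum_cosh r).smul_const (1 : A) using 2 with n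
    rw [smul_pow, hY2, smul_smul, div_eq_inv_mul]
  · convert (Real.hasSum_sinh r).smul_const Y using 2 with n
    rw [smul_pow, pow_succ Y, hY2, one_mul, smul_smul, div_eq_inv_mul]

namespace Quaternion

theorem star_mul_self_eq_norm_sq (a : ℍ[ℝ]) : star a * a = ((‖a‖ ^ 2 : ℝ) : ℍ[ℝ]) := by
  rw [star_mul_self, normSq_eq_norm_mul_self, sq]

theorem mul_star_self_eq_norm_sq (a : ℍ[ℝ]) : a * star a = ((‖a‖ ^ 2 : ℝ) : ℍ[ℝ]) := by
  rw [self_mul_star, normSq_eq_norm_mul_self, sq]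

theorem star_mul_self_of_norm_eq_one {a : ℍ[ℝ]} (ha : ‖a‖ = 1) : star a * a = 1 := by
  rw [star_mul_self_eq_norm_sq, ha]; norm_num

theorem mul_star_self_of_norm_eq_one {a : ℍ[ℝ]} (ha : ‖a‖ = 1) : a * star a = 1 := by
  rw [mul_star_self_eq_norm_sq, ha]; norm_num

theorem mul_star_cancel_left_of_norm_eq_one {a : ℍ[ℝ]} (ha : ‖a‖ = 1) (x : ℍ[ℝ]) :
    a * (star a * x) = x := by
  rw [← mul_assoc, mul_star_self_of_norm_eq_one ha, one_mul]

end Quaternion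

theorem mB_mul_self (q : ℍ[ℝ]) :
    !![0, star q; q, 0] * !![0, star q; q, 0] = (‖q‖ ^ 2) • (1 : Matrix (Fin 2) (Fin 2) ℍ[ℝ]) := by
  rw [mul_fin_two, one_fin_two, smul_of]
  simp [star_mul_self_eq_norm_sq, mul_star_self_eq_norm_sq, ← coe_mul_eq_smul]

theorem exp_mB (q : ℍ[ℝ]) :
    exp !![0, star q; q, 0] =
      Real.cosh ‖q‖ • 1 + (Real.sinh ‖q‖ / ‖q‖) • !![0, star q; q, 0] := by
  rcases eq_or_ne q 0 with rfl | hq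
  · have h0 : !![0, 0; 0, 0] = (0 : Matrix (Fin 2) (Fin 2) ℍ[ℝ]) := (eta_fin_two 0).symm
    simp [h0]
  have hq' : ‖q‖ ≠ 0 := norm_ne_zero_iff.mpr hq
  set X : Matrix (Fin 2) (Fin 2) ℍ[ℝ] := !![0, star q; q, 0]
  have hY : (‖q‖⁻¹ • X) * (‖q‖⁻¹ • X) = 1 := by
    rw [smul_mul_smul_comm, mB_mul_self, smul_smul, ← sq, ← mul_pow, inv_mul_cancel₀ hq', one_pow,
      one_smul]
  have hX : X = ‖q‖ • ‖q‖⁻¹ • X := by rw [smul_smul, mul_inv_cancel₀ hq', one_smul]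
  rw [hX, exp_smul_of_mul_self_eq_one hY, smul_smul, div_eq_mul_inv, ← hX]

theorem diag_mul_exp_mB_mul_scalar (u v q : ℍ[ℝ]) :
    !![u, 0; 0, 1] * exp !![0, star q; q, 0] * !![v, 0; 0, v] =
      !![Real.cosh ‖q‖ • (u * v), (Real.sinh ‖q‖ / ‖q‖) • (u * star q * v);
        (Real.sinh ‖q‖ / ‖q‖) • (q * v), Real.cosh ‖q‖ • v] := by
  rw [exp_mB]
  refine Matrix.ext fun i j => ?_
  fin_cases i <;> fin_cases j <;>
    simp [mul_apply, vecMul, dotProduct, Fin.sum_univ_two, one_apply, mul_assoc]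

theorem entries_of_sp11 {a b c d : ℍ[ℝ]}
    (h : !![a, b; c, d]ᴴ * !![1, 0; 0, -1] * !![a, b; c, d] = !![1, 0; 0, -1]) :
    star a * a = 1 + star c * c ∧ star a * b = star c * d ∧ star d * d = 1 + star b * b := by
  have h00 := congrFun₂ h 0 0
  have h01 := congrFun₂ h 0 1
  have h11 := congrFun₂ h 1 1
  simp only [mul_apply, conjTranspose_apply, of_apply, cons_val', cons_val_zero,
    cons_val_fin_one, Fin.sum_univ_two, cons_val_one, mul_one, mul_zero, add_zero, mul_neg,
    zero_add, neg_mul] at h00 h01 h11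
  exact ⟨by rw [← h00]; abel, add_neg_eq_zero.mp h01,
    by rw [← neg_neg (1 : ℍ[ℝ]), ← h11]; abel⟩

theorem norm_eq_and_norm_sq_of_sp11_entries {a b c d : ℍ[ℝ]} (h00 : star a * a = 1 + star c * c)
    (h01 : star a * b = star c * d) (h11 : star d * d = 1 + star b * b) :
    ‖a‖ = ‖d‖ ∧ ‖d‖ ^ 2 = 1 + ‖c‖ ^ 2 := by
  rw [star_mul_self_eq_norm_sq, star_mul_self_eq_norm_sq, ← coe_one, ← coe_add] at h00 h11
  replace h00 := coe_injective h00
  replace h11 := coe_injective h11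
  have h01' : ‖a‖ ^ 2 * ‖b‖ ^ 2 = ‖c‖ ^ 2 * ‖d‖ ^ 2 := by
    rw [← mul_pow, ← mul_pow]; simpa using congrArg (‖·‖ ^ 2) h01
  have had : ‖a‖ ^ 2 = ‖d‖ ^ 2 := by nlinarith
  exact ⟨(sq_eq_sq₀ (norm_nonneg _) (norm_nonneg _)).mp had, by linarith⟩

theorem exists_norm_eq_arsinh_and_smul_eq {E : Type*} [NormedAddCommGroup E] [NormedSpace ℝ E]
    (p : E) : ∃ q : E, ‖q‖ = Real.arsinh ‖p‖ ∧ (Real.sinh ‖q‖ / ‖q‖) • q = p := by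
  rcases eq_or_ne p 0 with rfl | hp
  · exact ⟨0, by simp, by simp⟩
  have hp' : 0 < ‖p‖ := norm_pos_iff.mpr hp
  have hr : 0 < Real.arsinh ‖p‖ := Real.arsinh_pos_iff.mpr hp'
  have hq : ‖(Real.arsinh ‖p‖ / ‖p‖) • p‖ = Real.arsinh ‖p‖ := by
    rw [norm_smul, Real.norm_of_nonneg (by positivity), div_mul_cancel₀ _ hp'.ne']
  refine ⟨_, hq, ?_⟩
  rw [hq, Real.sinh_arsinh, smul_smul, div_mul_div_cancel₀ hr.ne', div_self hp'.ne', one_smul]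

theorem exists_decomp_of_sp11_entries {a b c d : ℍ[ℝ]} (h00 : star a * a = 1 + star c * c)
    (h01 : star a * b = star c * d) (h11 : star d * d = 1 + star b * b) :
    ∃ u v q : ℍ[ℝ], ‖u‖ = 1 ∧ ‖v‖ = 1 ∧
      !![a, b; c, d] = !![Real.cosh ‖q‖ • (u * v), (Real.sinh ‖q‖ / ‖q‖) • (u * star q * v);
        (Real.sinh ‖q‖ / ‖q‖) • (q * v), Real.cosh ‖q‖ • v] := by
  obtain ⟨had, hdc⟩ := norm_eq_and_norm_sq_of_sp11_entries h00 h01 h11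
  have hd : ‖d‖ ≠ 0 := by
    intro h; rw [h] at hdc; nlinarith [sq_nonneg ‖c‖]
  obtain ⟨v, hv, hdv⟩ : ∃ v : ℍ[ℝ], ‖v‖ = 1 ∧ d = ‖d‖ • v :=
    ⟨‖d‖⁻¹ • d, by rw [norm_smul, norm_inv, norm_norm, inv_mul_cancel₀ hd],
      by rw [smul_smul, mul_inv_cancel₀ hd, one_smul]⟩
  obtain ⟨u, hu, hau⟩ : ∃ u : ℍ[ℝ], ‖u‖ = 1 ∧ a = ‖d‖ • (u * v) :=
    ⟨‖d‖⁻¹ • (a * star v),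
      by rw [norm_smul, norm_mul, Quaternion.norm_star, hv, mul_one, had, norm_inv, norm_norm,
        inv_mul_cancel₀ hd],
      by simp [smul_smul, mul_inv_cancel₀ hd, mul_assoc, star_mul_self_of_norm_eq_one hv]⟩
  obtain ⟨p, hp, hcp⟩ : ∃ p : ℍ[ℝ], ‖p‖ = ‖c‖ ∧ c = p * v :=
    ⟨c * star v, by rw [norm_mul, Quaternion.norm_star, hv, mul_one],
      by simp [mul_assoc, star_mul_self_of_norm_eq_one hv]⟩
  obtain ⟨q, hq, hSq⟩ := exists_norm_eq_arsinh_and_smul_eq p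
  have hC : Real.cosh ‖q‖ = ‖d‖ := by
    rw [hq, Real.cosh_arsinh, hp, ← hdc, Real.sqrt_sq (norm_nonneg d)]
  have hb : b = u * star p * v := by
    conv_rhs at h01 => rw [hdv]
    rw [hau, hcp, Quaternion.star_smul, star_mul, star_mul, smul_mul_assoc,
      mul_smul_comm] at h01
    have h := congrArg (u * v * ·) (smul_right_injective _ hd h01)
    simpa [mul_assoc, mul_star_cancel_left_of_norm_eq_one hu,
      mul_star_cancel_left_of_norm_eq_one hv] using h
  have hqc : (Real.sinh ‖q‖ / ‖q‖) • (q * v) = c := by rw [← smul_mul_assoc, hSq, hcp]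
  have hqb : (Real.sinh ‖q‖ / ‖q‖) • (u * star q * v) = b := by
    rw [← smul_mul_assoc, ← mul_smul_comm, ← Quaternion.star_smul, hSq, hb]
  exact ⟨u, v, q, hu, hv, by rw [hC, ← hau, ← hdv, hqc, hqb]⟩

theorem eq_of_decomp_eq {u₁ v₁ q₁ u₂ v₂ q₂ : ℍ[ℝ]} (hv₁ : ‖v₁‖ = 1) (hv₂ : ‖v₂‖ = 1)
    (h : !![Real.cosh ‖q₁‖ • (u₁ * v₁), (Real.sinh ‖q₁‖ / ‖q₁‖) • (u₁ * star q₁ * v₁);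
          (Real.sinh ‖q₁‖ / ‖q₁‖) • (q₁ * v₁), Real.cosh ‖q₁‖ • v₁] =
        !![Real.cosh ‖q₂‖ • (u₂ * v₂), (Real.sinh ‖q₂‖ / ‖q₂‖) • (u₂ * star q₂ * v₂);
          (Real.sinh ‖q₂‖ / ‖q₂‖) • (q₂ * v₂), Real.cosh ‖q₂‖ • v₂]) :
    u₁ = u₂ ∧ v₁ = v₂ ∧ q₁ = q₂ := by
  have h00 := congrFun₂ h 0 0
  have h10 := congrFun₂ h 1 0
  have h11 := congrFun₂ h 1 1
  simp only [of_apply, cons_val', cons_val_zero, cons_val_one, empty_val', cons_val_fin_one]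
    at h00 h10 h11
  have hq : ‖q₁‖ = ‖q₂‖ := by
    have h := congrArg norm h11
    rw [norm_smul, norm_smul, hv₁, hv₂, Real.norm_of_nonneg (Real.cosh_pos _).le,
      Real.norm_of_nonneg (Real.cosh_pos _).le, mul_one, mul_one] at h
    exact Real.cosh_injOn (norm_nonneg _) (norm_nonneg _) h
  rw [← hq] at h00 h10 h11
  have hC : Real.cosh ‖q₁‖ ≠ 0 := (Real.cosh_pos _).ne'
  obtain rfl : v₁ = v₂ := smul_right_injective _ hC h11
  have hv0 : v₁ ≠ 0 := norm_ne_zero_iff.mp (by rw [hv₁]; exact one_ne_zero)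
  refine ⟨mul_right_cancel₀ hv0 (smul_right_injective _ hC h00), rfl, ?_⟩
  rcases eq_or_ne ‖q₁‖ 0 with h0 | h0
  · rw [norm_eq_zero.mp h0, norm_eq_zero.mp (hq ▸ h0 : ‖q₂‖ = 0)]
  · have hS : Real.sinh ‖q₁‖ / ‖q₁‖ ≠ 0 :=
      div_ne_zero (Real.sinh_pos_iff.mpr ((norm_nonneg _).lt_of_ne' h0)).ne' h0
    exact mul_right_cancel₀ hv0 (smul_right_injective _ hS h10)

/-- Decomposition of `Sp(1,1)` induced by regular Möbius transformations: every
`A ∈ Sp(1,1)` is uniquely `diag(u,1)·exp X·(v I₂)` with `u, v` unit quaternions and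
`X = [[0, conj q],[q, 0]] ∈ m_𝔹`. -/
theorem stmt_18 (A : Matrix (Fin 2) (Fin 2) (Quaternion ℝ))
    (hA : Aᴴ * !![1, 0; 0, -1] * A = !![1, 0; 0, -1]) :
    (∃ u v q : Quaternion ℝ, ‖u‖ = 1 ∧ ‖v‖ = 1 ∧
      A = !![u, 0; 0, 1] * NormedSpace.exp !![0, star q; q, 0] * !![v, 0; 0, v]) ∧
    (∀ u₁ v₁ q₁ u₂ v₂ q₂ : Quaternion ℝ,
      ‖u₁‖ = 1 → ‖v₁‖ = 1 → ‖u₂‖ = 1 → ‖v₂‖ = 1 →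
      !![u₁, 0; 0, 1] * NormedSpace.exp !![0, star q₁; q₁, 0] * !![v₁, 0; 0, v₁] =
        !![u₂, 0; 0, 1] * NormedSpace.exp !![0, star q₂; q₂, 0] * !![v₂, 0; 0, v₂] →
      u₁ = u₂ ∧ v₁ = v₂ ∧ q₁ = q₂) := by
  refine ⟨?_, fun u₁ v₁ q₁ u₂ v₂ q₂ _ hv₁ _ hv₂ h => ?_⟩
  · rw [eta_fin_two A] at hA ⊢
    obtain ⟨h00, h01, h11⟩ := entries_of_sp11 hA
    simpa only [diag_mul_exp_mB_mul_scalar] using exists_decomp_of_sp11_entries h00 h01 h11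
  · rw [diag_mul_exp_mB_mul_scalar, diag_mul_exp_mB_mul_scalar] at h
    exact eq_of_decomp_eq hv₁ hv₂ h
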